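/- arXiv:2010.00097 — 6 statements merged into one kernel-verified Lean document; each statement's English description precedes it below -/
import Mathlib

section
/- Let A be a Boolean algebra, B a complete atomic Boolean algebra, and α : A → B a Boolean homomorphism such that every atom of B is a meet (infimum) of some set of elements of the image α(A). Then the map h_α : At(B) → X_α, x ↦ α_x, is a bijection, where X_α = {α_x : x ∈ At(B)} and α_x : A → 2 is defined by α_x(a) = 1 ⟺ x ≤ α(a). -/
open Classical in
/-- The map `α_x : A → 2`, `α_x(a) = 1 ⟺ x ≤ α(a)`. -/
noncomputable def alphaMap {A B : Type*} [BooleanAlgebra A] [CompleteAtomicBooleanAlgebra B]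
    (α : BoundedLatticeHom A B) (x : B) : A → Bool :=
  fun a => decide (x ≤ α a)

/-- if every atom of `B` is a meet of elements of `α(A)`, then
`h_α : At(B) → X_α`, `x ↦ α_x`, is a bijection. -/
theorem stmt4 {A B : Type*} [BooleanAlgebra A] [CompleteAtomicBooleanAlgebra B]
    (α : BoundedLatticeHom A B)
    (h : ∀ x : B, IsAtom x → ∃ T : Set B, T ⊆ Set.range α ∧ x = sInf T) :
    Set.BijOn (alphaMap α) {x : B | IsAtom x}
      {f : A → Bool | ∃ x : B, IsAtom x ∧ f = alphaMap α x} := by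
  refine ⟨fun x hx => ⟨x, hx, rfl⟩, ?_, fun f hf => ?_⟩
  · intro x hx y hy hxy
    obtain ⟨T, hT, hxT⟩ := h x hx
    have hyx : y ≤ x := by
      rw [hxT]
      refine le_sInf fun t ht => ?_
      obtain ⟨a, rfl⟩ := hT ht
      have h1 : x ≤ α a := hxT ▸ sInf_le ht
      have h2 : alphaMap α x a = alphaMap α y a := congrFun hxy a
      simpa [alphaMap, h1] using h2.symm
    exact ((hx.le_iff.mp hyx).resolve_left hy.1).symm
  · obtain ⟨x, hx, rfl⟩ := hf
    exact ⟨x, hx, rfl⟩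
end

section
/- Let X be a locally compact Hausdorff zero-dimensional space. Then the image X̂ of the canonical embedding x ↦ x̂ of X into the compact space S(CO(X)) is an open subset of S(CO(X)). -/
open TopologicalSpace

def sA {A : Type*} [BooleanAlgebra A] (a : A) : Set (BoundedLatticeHom A Bool) :=
  {x | x a = true}

instance stoneTopology (A : Type*) [BooleanAlgebra A] :
    TopologicalSpace (BoundedLatticeHom A Bool) :=
  TopologicalSpace.generateFrom (Set.range (sA (A := A)))

/-! A point `ψ` of `S(CO(X))` with `ψ V = true` for a compact clopen `V` generates a filter on `X`
containing `V`, so it has a cluster point `y ∈ V`. Clopen sets are closed, so `y` lies in every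
clopen set that `ψ` sends to `true`, and in none of the others since `ψ` preserves complements:
`ψ = ŷ`. Hence the basic open set `{ψ | ψ V = true}` of a compact clopen neighbourhood `V` of
`x`, which exists by local compactness and zero-dimensionality, lies in `X̂`. -/

open Filter

namespace Clopens

variable {X : Type*} [TopologicalSpace X]

def filterOfHom (ψ : BoundedLatticeHom (Clopens X) Bool) : Filter X where
  sets := {s | ∃ U : Clopens X, ψ U = true ∧ (U : Set X) ⊆ s}
  univ_sets := ⟨⊤, map_top ψ, subset_rfl⟩
  sets_of_superset := fun ⟨U, hU, hUs⟩ hst => ⟨U, hU, hUs.trans hst⟩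
  inter_sets := fun ⟨U, hU, hUs⟩ ⟨V, hV, hVt⟩ =>
    ⟨U ⊓ V, by simp [hU, hV], Set.inter_subset_inter hUs hVt⟩

variable {ψ : BoundedLatticeHom (Clopens X) Bool}

theorem mem_filterOfHom {U : Clopens X} (hU : ψ U = true) : (U : Set X) ∈ filterOfHom ψ :=
  ⟨U, hU, subset_rfl⟩

instance filterOfHom_neBot : (filterOfHom ψ).NeBot := by
  refine ⟨fun hbot => ?_⟩
  obtain ⟨U, hU, hU_empty⟩ : ∅ ∈ filterOfHom ψ := hbot ▸ mem_bot
  have : U = ⊥ := Clopens.ext (Set.subset_empty_iff.mp hU_empty)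
  simp [this] at hU

theorem exists_forall_map_eq_true_iff_mem {K : Clopens X} (hK : IsCompact (K : Set X))
    (hψK : ψ K = true) : ∃ y : X, ∀ U : Clopens X, ψ U = true ↔ y ∈ U := by
  obtain ⟨y, -, hy⟩ := hK (le_principal_iff.mpr (mem_filterOfHom hψK))
  have mem_of_map_eq_true {U : Clopens X} (hU : ψ U = true) : y ∈ U :=
    U.isClopen.isClosed.closure_subset (hy.mem_closure_of_mem _ (mem_filterOfHom hU))
  refine ⟨y, fun U => ⟨mem_of_map_eq_true, fun hyU => ?_⟩⟩
  by_contra hU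
  have : y ∈ Uᶜ := mem_of_map_eq_true (by simpa [map_compl'] using hU)
  exact this hyU

end Clopens

theorem exists_isClopen_isCompact_mem {X : Type*} [TopologicalSpace X] [LocallyCompactSpace X]
    (hzd : ∀ (x : X) (U : Set X), IsOpen U → x ∈ U →
      ∃ V : Set X, IsClopen V ∧ x ∈ V ∧ V ⊆ U)
    (x : X) : ∃ V : Set X, IsClopen V ∧ IsCompact V ∧ x ∈ V := by
  obtain ⟨K, hK, hKx⟩ := exists_compact_mem_nhds x
  obtain ⟨V, hV, hxV, hVK⟩ :=
    hzd x (interior K) isOpen_interior (mem_interior_iff_mem_nhds.mpr hKx)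
  exact ⟨V, hV, hK.of_isClosed_subset hV.isClosed (hVK.trans interior_subset), hxV⟩

theorem stmt8_general {X : Type*} [TopologicalSpace X] [LocallyCompactSpace X]
    (hzd : ∀ (x : X) (U : Set X), IsOpen U → x ∈ U →
      ∃ V : Set X, IsClopen V ∧ x ∈ V ∧ V ⊆ U)
    (h : X → BoundedLatticeHom (Clopens X) Bool)
    (hh : ∀ (x : X) (U : Clopens X), h x U = true ↔ x ∈ U) :
    IsOpen (Set.range h) := by
  rw [isOpen_iff_forall_mem_open]
  rintro _ ⟨x, rfl⟩
  obtain ⟨V, hV, hV_compact, hxV⟩ := exists_isClopen_isCompact_mem hzd x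
  refine ⟨sA ⟨V, hV⟩, fun ψ hψ => ?_, .basic _ ⟨_, rfl⟩, (hh x _).mpr hxV⟩
  obtain ⟨y, hy⟩ := Clopens.exists_forall_map_eq_true_iff_mem hV_compact hψ
  exact ⟨y, DFunLike.ext _ _ fun U => Bool.eq_iff_iff.mpr ((hh y U).trans (hy U).symm)⟩

/-- for a locally compact Hausdorff zero-dimensional space `X`, the image `X̂`
of the canonical embedding of `X` into `S(CO(X))` is an open subset of `S(CO(X))`. -/
theorem stmt8 {X : Type*} [TopologicalSpace X] [T2Space X] [LocallyCompactSpace X]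
    (hzd : ∀ (x : X) (U : Set X), IsOpen U → x ∈ U →
      ∃ V : Set X, IsClopen V ∧ x ∈ V ∧ V ⊆ U)
    (h : X → BoundedLatticeHom (Clopens X) Bool)
    (hh : ∀ (x : X) (U : Clopens X), h x U = true ↔ x ∈ U) :
    IsOpen (Set.range h) :=
  stmt8_general hzd h hh
end

section
/- Let (A, X) be an ldz-algebra, i.e., A is a Boolean algebra, X ⊆ S(A) is dense, X ∩ s_A(A) = CO(X) (where s_A(a) = {x ∈ S(A) : x(a) = 1} and CO(X) is computed in the subspace topology on X), and X is open in S(A). Then I_X := {a ∈ A : s_A(a) ⊆ X} is a dense ideal of A, meaning: I_X is an ideal, and for every nonzero b ∈ A there exists nonzero a ∈ I_X with a ≤ b. -/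
namespace Order.Ideal.IsPrime

theorem inf_mem_iff {P : Type*} [SemilatticeInf P] {I : Order.Ideal P} (hI : I.IsPrime) {a b : P} :
    a ⊓ b ∈ I ↔ a ∈ I ∨ b ∈ I :=
  ⟨hI.mem_or_mem, fun h => h.elim (I.lower inf_le_left) (I.lower inf_le_right)⟩

variable {L : Type*} [DistribLattice L] [BoundedOrder L] {I : Order.Ideal L}

open Classical in
noncomputable def toBoolHom (hI : I.IsPrime) : BoundedLatticeHom L Bool where
  toFun a := decide (a ∉ I)
  map_sup' _ _ := by simp [Order.Ideal.sup_mem_iff]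
  map_inf' _ _ := by simp [hI.inf_mem_iff, not_or]
  map_top' := by simp [hI.toIsProper.top_notMem]
  map_bot' := by simp [I.bot_mem]

theorem toBoolHom_apply_eq_true (hI : I.IsPrime) {a : L} : hI.toBoolHom a = true ↔ a ∉ I := by
  classical
  exact decide_eq_true_iff

end Order.Ideal.IsPrime

theorem exists_boundedLatticeHom_bool_apply_eq_true {L : Type*} [DistribLattice L]
    [BoundedOrder L] {b : L} (hb : b ≠ ⊥) : ∃ x : BoundedLatticeHom L Bool, x b = true := by
  have hdisj : Disjoint (Order.PFilter.principal b : Set L)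
      (Order.Ideal.principal (⊥ : L) : Set L) :=
    Set.disjoint_left.mpr fun c hbc hc =>
      hb (le_bot_iff.mp
        ((Order.PFilter.mem_principal.mp hbc).trans (Order.Ideal.mem_principal.mp hc)))
  obtain ⟨J, hJ, -, hJdisj⟩ := DistribLattice.prime_ideal_of_disjoint_filter_ideal hdisj
  exact ⟨hJ.toBoolHom, hJ.toBoolHom_apply_eq_true.mpr
    (Set.disjoint_left.mp hJdisj (Order.PFilter.mem_principal.mpr le_rfl))⟩

section Stone

variable {A : Type*} [BooleanAlgebra A]

theorem sA_bot : sA (⊥ : A) = ∅ := by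
  ext x; simp [sA]

theorem sA_top : sA (⊤ : A) = Set.univ := by
  ext x; simp [sA]

theorem sA_inf (a b : A) : sA (a ⊓ b) = sA a ∩ sA b := by
  ext x; simp [sA]

theorem sA_sup (a b : A) : sA (a ⊔ b) = sA a ∪ sA b := by
  ext x; simp [sA]

theorem sA_mono {a b : A} (hab : a ≤ b) : sA a ⊆ sA b := by
  rw [← inf_eq_left.mpr hab, sA_inf]
  exact Set.inter_subset_right

theorem sA_nonempty {b : A} (hb : b ≠ ⊥) : (sA b).Nonempty :=
  exists_boundedLatticeHom_bool_apply_eq_true hb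

theorem ne_bot_of_mem_sA {a : A} {x : BoundedLatticeHom A Bool} (hx : x ∈ sA a) : a ≠ ⊥ := by
  rintro rfl
  simp [sA_bot] at hx

theorem isTopologicalBasis_sA : TopologicalSpace.IsTopologicalBasis (Set.range (sA (A := A))) := by
  refine ⟨?_, ?_, rfl⟩
  · rintro _ ⟨a, rfl⟩ _ ⟨b, rfl⟩ x hx
    exact ⟨sA (a ⊓ b), ⟨a ⊓ b, rfl⟩, by rwa [sA_inf], by rw [sA_inf]⟩
  · rw [Set.sUnion_eq_univ_iff]
    exact fun x => ⟨sA ⊤, ⟨⊤, rfl⟩, by simp [sA_top]⟩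

theorem isOpen_sA (a : A) : IsOpen (sA a) :=
  isTopologicalBasis_sA.isOpen ⟨a, rfl⟩

/-- The ideal `I_X`. -/
def idealOfSubset (X : Set (BoundedLatticeHom A Bool)) : Order.Ideal A where
  carrier := {a | sA a ⊆ X}
  lower' _ _ hab hb := (sA_mono hab).trans hb
  nonempty' := ⟨⊥, by simp [sA_bot]⟩
  directed' a ha b hb :=
    ⟨a ⊔ b, by simpa [sA_sup] using And.intro ha hb, le_sup_left, le_sup_right⟩

theorem mem_idealOfSubset {X : Set (BoundedLatticeHom A Bool)} {a : A} :
    a ∈ idealOfSubset X ↔ sA a ⊆ X :=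
  Iff.rfl

theorem exists_mem_idealOfSubset_ne_bot_le {X : Set (BoundedLatticeHom A Bool)}
    (hdense : Dense X) (hopen : IsOpen X) {b : A} (hb : b ≠ ⊥) :
    ∃ a ∈ idealOfSubset X, a ≠ ⊥ ∧ a ≤ b := by
  obtain ⟨y, hyb, hyX⟩ := hdense.inter_open_nonempty _ (isOpen_sA b) (sA_nonempty hb)
  obtain ⟨_, ⟨a, rfl⟩, hya, haX⟩ := isTopologicalBasis_sA.exists_subset_of_mem_open hyX hopen
  have hy : y ∈ sA (a ⊓ b) := by rw [sA_inf]; exact ⟨hya, hyb⟩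
  refine ⟨a ⊓ b, ?_, ne_bot_of_mem_sA hy, inf_le_right⟩
  rw [mem_idealOfSubset, sA_inf]
  exact Set.inter_subset_left.trans haX

end Stone

theorem stmt10_general {A : Type*} [BooleanAlgebra A] (X : Set (BoundedLatticeHom A Bool))
    (hdense : Dense X)
    (hopen : IsOpen X) :
    (⊥ : A) ∈ {a : A | sA a ⊆ X} ∧
    (∀ a b : A, a ≤ b → b ∈ {a : A | sA a ⊆ X} → a ∈ {a : A | sA a ⊆ X}) ∧
    (∀ a ∈ {a : A | sA a ⊆ X}, ∀ b ∈ {a : A | sA a ⊆ X}, a ⊔ b ∈ {a : A | sA a ⊆ X}) ∧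
    (∀ b : A, b ≠ ⊥ → ∃ a ∈ {a : A | sA a ⊆ X}, a ≠ ⊥ ∧ a ≤ b) :=
  ⟨(idealOfSubset X).bot_mem, fun _ _ hab hb => (idealOfSubset X).lower hab hb,
    fun _ ha _ hb => (idealOfSubset X).sup_mem ha hb,
    fun _ hb => exists_mem_idealOfSubset_ne_bot_le hdense hopen hb⟩

/-- if `(A, X)` is an ldz-algebra (`X ⊆ S(A)` dense, `X ∩ s_A(A) = CO(X)`
in the subspace topology, and `X` open), then `I_X = {a : s_A(a) ⊆ X}` is a dense ideal
of `A`. -/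
theorem stmt10 {A : Type*} [BooleanAlgebra A] (X : Set (BoundedLatticeHom A Bool))
    (hdense : Dense X)
    (hdz : {V : Set X | IsClopen V} = {V : Set X | ∃ a : A, V = Subtype.val ⁻¹' sA a})
    (hopen : IsOpen X) :
    (⊥ : A) ∈ {a : A | sA a ⊆ X} ∧
    (∀ a b : A, a ≤ b → b ∈ {a : A | sA a ⊆ X} → a ∈ {a : A | sA a ⊆ X}) ∧
    (∀ a ∈ {a : A | sA a ⊆ X}, ∀ b ∈ {a : A | sA a ⊆ X}, a ⊔ b ∈ {a : A | sA a ⊆ X}) ∧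
    (∀ b : A, b ≠ ⊥ → ∃ a ∈ {a : A | sA a ⊆ X}, a ≠ ⊥ ∧ a ≤ b) :=
  stmt10_general X hdense hopen
end

section
/- Let A, B be Boolean algebras, I a dense ideal of A, J an ideal of B, and φ : A → B a Boolean homomorphism such that the induced map x' ↦ x' ∘ φ sends {x' ∈ S(B) : ∃ b ∈ J, x'(b) = 1} into the open set X_I = ⋃{s_A(a) : a ∈ I}. Then φ satisfies condition (LBA): for every b ∈ J there exists a ∈ I with b ≤ φ(a). -/
/-- An ideal of a Boolean algebra (not necessarily proper): contains \`⊥\`,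
downward closed, closed under finite joins. -/
def IsIdl {A : Type*} [BooleanAlgebra A] (I : Set A) : Prop :=
  ⊥ ∈ I ∧ (∀ a b : A, a ≤ b → b ∈ I → a ∈ I) ∧ ∀ a ∈ I, ∀ b ∈ I, a ⊔ b ∈ I

/-- if the map `x' ↦ x' ∘ φ` sends `{x' ∈ S(B) : ∃ b ∈ J, x'(b) = 1}`
into `X_I = ⋃ {s_A(a) : a ∈ I}`, then `φ` satisfies condition (LBA):
for every `b ∈ J` there is `a ∈ I` with `b ≤ φ(a)`. -/
theorem stmt14 {A B : Type*} [BooleanAlgebra A] [BooleanAlgebra B]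
    (φ : BoundedLatticeHom A B) (I : Set A) (J : Set B)
    (hI : IsIdl I) (hIdense : ∀ b : A, b ≠ ⊥ → ∃ a ∈ I, a ≠ ⊥ ∧ a ≤ b)
    (hJ : IsIdl J)
    (hmap : ∀ x' : BoundedLatticeHom B Bool, (∃ b ∈ J, x' b = true) →
      x'.comp φ ∈ ⋃ a ∈ I, sA a) :
    ∀ b ∈ J, ∃ a ∈ I, b ≤ φ a := by
  classical
  intro b hbJ
  by_contra hcon
  push_neg at hcon
  -- The ideal generated by φ '' I
  have hK : Order.IsIdeal {c : B | ∃ a ∈ I, c ≤ φ a} := by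
    refine ⟨fun c d hdc ⟨a, haI, hle⟩ => ⟨a, haI, hdc.trans hle⟩,
      ⟨⊥, ⊥, hI.1, bot_le⟩, ?_⟩
    rintro c ⟨a1, h1, l1⟩ d ⟨a2, h2, l2⟩
    exact ⟨c ⊔ d, ⟨a1 ⊔ a2, hI.2.2 a1 h1 a2 h2, by
      rw [map_sup]; exact sup_le_sup l1 l2⟩, le_sup_left, le_sup_right⟩
  set K : Order.Ideal B := hK.toIdeal with hKdef
  have hdisj : Disjoint ((Order.PFilter.principal b : Order.PFilter B) : Set B)
      (K : Set B) := by
    rw [Set.disjoint_left]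
    rintro c hcF ⟨a, haI, hle⟩
    have hbc : b ≤ c := by
      simpa [Order.PFilter.mem_principal] using hcF
    exact hcon a haI (hbc.trans hle)
  obtain ⟨P, hPprime, hKP, hPdisj⟩ :=
    DistribLattice.prime_ideal_of_disjoint_filter_ideal hdisj
  have hbP : b ∉ P := fun h =>
    Set.disjoint_left.mp hPdisj (by simp [Order.PFilter.mem_principal]) h
  have htop : (⊤ : B) ∉ P := by
    intro h
    exact hPprime.toIsProper.ne_univ (Set.eq_univ_of_forall fun c => P.lower le_top h)
  -- build the homomorphism
  let x' : BoundedLatticeHom B Bool :=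
    { toFun := fun c => decide (c ∉ P)
      map_sup' := fun c d => by
        by_cases hc : c ∈ P <;> by_cases hd : d ∈ P <;>
          simp [hc, hd, Order.Ideal.sup_mem_iff]
      map_inf' := fun c d => by
        by_cases hc : c ∈ P
        · have h2 : c ⊓ d ∈ P := P.lower inf_le_left hc
          simp [hc, h2]
        · by_cases hd : d ∈ P
          · have h2 : c ⊓ d ∈ P := P.lower inf_le_right hd
            simp [hd, h2]
          · have : c ⊓ d ∉ P := fun h => (hPprime.mem_or_mem h).elim hc hd
            simp [hc, hd, this]
      map_top' := by simp [htop]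
      map_bot' := by simp [P.bot_mem] }
  have := hmap x' ⟨b, hbJ, by simp [x', hbP]⟩
  simp only [Set.mem_iUnion] at this
  obtain ⟨a, haI, ha⟩ := this
  have : φ a ∉ P := by
    have := ha
    simp only [sA, Set.mem_setOf_eq, BoundedLatticeHom.comp_apply] at this
    simpa [x'] using this
  exact this (hKP ⟨a, haI, le_rfl⟩)
end

section
/- Let X be a locally compact Hausdorff zero-dimensional space. Under the canonical embedding x ↦ x̂ of X into S(CO(X)), a clopen set U ∈ CO(X) satisfies s_{CO(X)}(U) ⊆ X̂ if and only if U is compact. Hence the ideal {U ∈ CO(X) : s_{CO(X)}(U) ⊆ X̂} equals KO(X), the set of compact open subsets of X. -/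
/-! A point `x` and an ultrafilter `G` on `X` both give homomorphisms `CO(X) → Bool`, and when the
clopens form a base at `x`, the two agree exactly when `G` converges to `x`. Hence `s(U) ⊆ X̂` says
that every ultrafilter containing `U` converges to a point of `U`, which for the closed set `U` is
compactness. Conversely, for compact `U` the clopens sent to `true` by a homomorphism `f` with
`f U = true` have a common point `x` in `U`, and then `f = x̂`. -/

open TopologicalSpace

section

open Filter Topology

variable {X : Type*} [TopologicalSpace X]

namespace Ultrafilter

open scoped Classical in
noncomputable def clopensHom (G : Ultrafilter X) : BoundedLatticeHom (Clopens X) Bool where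
  toFun V := decide ((V : Set X) ∈ G)
  map_sup' V W := by simp [union_mem_iff]
  map_inf' V W := by simp [← mem_coe, Filter.inter_mem_iff]
  map_top' := by simp [← mem_coe]
  map_bot' := by simp

theorem clopensHom_eq_true_iff (G : Ultrafilter X) (V : Clopens X) :
    G.clopensHom V = true ↔ (V : Set X) ∈ G := by
  simp [clopensHom]

theorem le_nhds_of_forall_clopen_mem {G : Ultrafilter X} {x : X}
    (hbasis : ∀ U : Set X, IsOpen U → x ∈ U → ∃ V : Set X, IsClopen V ∧ x ∈ V ∧ V ⊆ U)
    (hG : ∀ V : Clopens X, x ∈ V → (V : Set X) ∈ G) : ↑G ≤ 𝓝 x := by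
  intro U hU
  obtain ⟨O, hOU, hO, hxO⟩ := mem_nhds_iff.1 hU
  obtain ⟨V, hV, hxV, hVO⟩ := hbasis O hO hxO
  exact mem_of_superset (hG ⟨V, hV⟩ hxV) (hVO.trans hOU)

end Ultrafilter

namespace BoundedLatticeHom

def clopensFilter (f : BoundedLatticeHom (Clopens X) Bool) : Filter X where
  sets := {s | ∃ V : Clopens X, f V = true ∧ (V : Set X) ⊆ s}
  univ_sets := ⟨⊤, map_top f, Set.subset_univ _⟩
  sets_of_superset := fun ⟨V, hV, hVs⟩ hst => ⟨V, hV, hVs.trans hst⟩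
  inter_sets := fun ⟨V, hV, hVs⟩ ⟨W, hW, hWt⟩ =>
    ⟨V ⊓ W, by rw [InfHomClass.map_inf, hV, hW]; rfl, Set.inter_subset_inter hVs hWt⟩

instance clopensFilter_neBot (f : BoundedLatticeHom (Clopens X) Bool) : f.clopensFilter.NeBot := by
  refine ⟨fun hbot => ?_⟩
  obtain ⟨V, hV, hVempty⟩ := (empty_mem_iff_bot.2 hbot : ∅ ∈ f.clopensFilter)
  have : V = ⊥ := SetLike.coe_injective (Set.subset_empty_iff.1 hVempty)
  simp [this] at hV

theorem exists_forall_eq_true_iff_mem_of_isCompact (f : BoundedLatticeHom (Clopens X) Bool)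
    {U : Clopens X} (hU : IsCompact (U : Set X)) (hfU : f U = true) :
    ∃ x : X, ∀ V : Clopens X, f V = true ↔ x ∈ V := by
  have hle : f.clopensFilter ≤ 𝓟 (U : Set X) := le_principal_iff.2 ⟨U, hfU, subset_rfl⟩
  obtain ⟨x, -, hx⟩ := hU hle
  have mem_of_eq_true : ∀ V : Clopens X, f V = true → x ∈ V := fun V hV => by
    simpa [V.isClopen.isClosed.closure_eq] using
      hx.mem_closure_of_mem (s := (V : Set X)) ⟨V, hV, subset_rfl⟩
  refine ⟨x, fun V => ⟨mem_of_eq_true V, fun hxV => ?_⟩⟩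
  by_contra hfV
  have hfVc : f Vᶜ = true := by simpa [map_compl'] using hfV
  exact mem_of_eq_true Vᶜ hfVc hxV

end BoundedLatticeHom

end

theorem stmt17_general {X : Type*} [TopologicalSpace X]
    (hzd : ∀ (x : X) (U : Set X), IsOpen U → x ∈ U →
      ∃ V : Set X, IsClopen V ∧ x ∈ V ∧ V ⊆ U)
    (h : X → BoundedLatticeHom (Clopens X) Bool)
    (hh : ∀ (x : X) (U : Clopens X), h x U = true ↔ x ∈ U) :
    (∀ U : Clopens X, sA U ⊆ Set.range h ↔ IsCompact (U : Set X)) ∧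
    {U : Clopens X | sA U ⊆ Set.range h} = {U : Clopens X | IsCompact (U : Set X)} := by
  have key : ∀ U : Clopens X, sA U ⊆ Set.range h ↔ IsCompact (U : Set X) := by
    intro U
    constructor
    · intro hsub
      refine isCompact_iff_ultrafilter_le_nhds'.2 fun G hUG => ?_
      obtain ⟨x, hx⟩ := hsub ((G.clopensHom_eq_true_iff U).2 hUG)
      have hG : ∀ V : Clopens X, h x V = true ↔ (V : Set X) ∈ G := fun V =>
        hx ▸ G.clopensHom_eq_true_iff V
      exact ⟨x, (hh x U).1 ((hG U).2 hUG),
        Ultrafilter.le_nhds_of_forall_clopen_mem (hzd x) fun V hxV => (hG V).1 ((hh x V).2 hxV)⟩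
    · intro hU f hfU
      obtain ⟨x, hx⟩ := f.exists_forall_eq_true_iff_mem_of_isCompact hU hfU
      exact ⟨x, DFunLike.ext _ _ fun V => Bool.eq_iff_iff.2 ((hh x V).trans (hx V).symm)⟩
  exact ⟨key, Set.ext key⟩

/-- for a locally compact Hausdorff zero-dimensional space `X` and the
canonical embedding `x ↦ x̂` into `S(CO(X))`, a clopen `U` satisfies
`s_{CO(X)}(U) ⊆ X̂` iff `U` is compact; hence `{U ∈ CO(X) : s(U) ⊆ X̂} = KO(X)`. -/
theorem stmt17 {X : Type*} [TopologicalSpace X] [T2Space X] [LocallyCompactSpace X]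
    (hzd : ∀ (x : X) (U : Set X), IsOpen U → x ∈ U →
      ∃ V : Set X, IsClopen V ∧ x ∈ V ∧ V ⊆ U)
    (h : X → BoundedLatticeHom (Clopens X) Bool)
    (hh : ∀ (x : X) (U : Clopens X), h x U = true ↔ x ∈ U) :
    (∀ U : Clopens X, sA U ⊆ Set.range h ↔ IsCompact (U : Set X)) ∧
    {U : Clopens X | sA U ⊆ Set.range h} = {U : Clopens X | IsCompact (U : Set X)} :=
  stmt17_general hzd h hh
end

section
/- Let X be a locally compact Hausdorff zero-dimensional space. Then the pair (CO(X), KO(X)) is a ZLBA: KO(X) is a dense ideal of the Boolean algebra CO(X) (every nonempty clopen set contains a nonempty compact open set), and for every simple ideal J of KO(X) the join ⋁ J exists in CO(X). -/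
open TopologicalSpace

/-- for a locally compact Hausdorff zero-dimensional space `X`, the pair
`(CO(X), KO(X))` is a ZLBA: `KO(X)` is a dense ideal of `CO(X)`, and every simple ideal
`J` of the lattice `KO(X)` has a join in `CO(X)`. -/
theorem stmt18 {X : Type*} [TopologicalSpace X] [T2Space X] [LocallyCompactSpace X]
    (hzd : ∀ (x : X) (U : Set X), IsOpen U → x ∈ U →
      ∃ V : Set X, IsClopen V ∧ x ∈ V ∧ V ⊆ U) :
    -- `KO(X)` is an ideal of `CO(X)`:
    ((⊥ : Clopens X) ∈ {U : Clopens X | IsCompact (U : Set X)} ∧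
      (∀ U V : Clopens X, U ≤ V → IsCompact (V : Set X) → IsCompact (U : Set X)) ∧
      (∀ U V : Clopens X, IsCompact (U : Set X) → IsCompact (V : Set X) →
        IsCompact ((U ⊔ V : Clopens X) : Set X))) ∧
    -- `KO(X)` is dense in `CO(X)`:
    (∀ U : Clopens X, U ≠ ⊥ →
      ∃ V : Clopens X, IsCompact (V : Set X) ∧ V ≠ ⊥ ∧ V ≤ U) ∧
    -- every simple ideal of `KO(X)` has a join in `CO(X)`:
    (∀ J : Set (Clopens X), J ⊆ {U : Clopens X | IsCompact (U : Set X)} →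
      -- `J` is an ideal of the lattice `KO(X)`:
      ((⊥ : Clopens X) ∈ J ∧
        (∀ U V : Clopens X, IsCompact (U : Set X) → U ≤ V → V ∈ J → U ∈ J) ∧
        (∀ U ∈ J, ∀ V ∈ J, U ⊔ V ∈ J)) →
      -- `J` is simple: `J ∨ ¬J = KO(X)` in the frame of ideals of `KO(X)`:
      (∀ W : Clopens X, IsCompact (W : Set X) →
        ∃ U ∈ J, ∃ V : Clopens X, (IsCompact (V : Set X) ∧ ∀ D ∈ J, V ⊓ D = ⊥) ∧
          W ≤ U ⊔ V) →
      ∃ s : Clopens X, IsLUB J s) := by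
  -- a compact clopen neighborhood of every point
  have hko : ∀ x : X, ∃ W : Clopens X, IsCompact (W : Set X) ∧ x ∈ (W : Set X) := by
    intro x
    obtain ⟨K, hK, hKx⟩ := exists_compact_mem_nhds x
    obtain ⟨V, hV, hxV, hVK⟩ := hzd x (interior K) isOpen_interior (mem_interior_iff_mem_nhds.2 hKx)
    exact ⟨⟨V, hV⟩, hK.of_isClosed_subset hV.1 (hVK.trans interior_subset), hxV⟩
  refine ⟨⟨isCompact_empty, ?_, ?_⟩, ?_, ?_⟩
  · intro U V hUV hV
    exact hV.of_isClosed_subset U.isClopen.1 hUV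
  · intro U V hU hV
    exact hU.union hV
  · intro U hU
    have : ∃ x, x ∈ (U : Set X) := by
      by_contra h
      push_neg at h
      exact hU (SetLike.ext fun x => ⟨fun hx => absurd hx (h x), fun hx => hx.elim⟩)
    obtain ⟨x, hx⟩ := this
    obtain ⟨V, hV, hxV, hVU⟩ := hzd x U U.isClopen.2 hx
    obtain ⟨K, hKc, hKx⟩ := hko x
    refine ⟨⟨V, hV⟩ ⊓ K, ?_, ?_, ?_⟩
    · exact hKc.of_isClosed_subset (hV.1.inter K.isClopen.1) Set.inter_subset_right
    · intro h
      have : x ∈ ((⟨V, hV⟩ ⊓ K : Clopens X) : Set X) := ⟨hxV, hKx⟩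
      rw [h] at this
      exact this
    · exact le_trans inf_le_left hVU
  · intro J hJko ⟨hbot, hdown, hsup⟩ hsimple
    set S : Set X := ⋃ U ∈ J, (U : Set X) with hS
    have hSopen : IsOpen S := isOpen_biUnion fun U _ => U.isClopen.2
    have hSclosed : IsClosed S := by
      rw [← closure_subset_iff_isClosed]
      intro x hx
      obtain ⟨W, hWc, hWx⟩ := hko x
      obtain ⟨U, hUJ, V, ⟨hVc, hVdisj⟩, hWUV⟩ := hsimple W hWc
      have hSWU : (W : Set X) ∩ S ⊆ (U : Set X) := by
        rintro y ⟨hyW, hyS⟩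
        obtain ⟨D, hDJ, hyD⟩ := by simpa [hS] using hyS
        have := hWUV hyW
        rcases this with h | h
        · exact h
        · exfalso
          have : y ∈ ((V ⊓ D : Clopens X) : Set X) := ⟨h, hyD⟩
          rw [hVdisj D hDJ] at this
          exact this
      have hx' : x ∈ closure ((W : Set X) ∩ S) :=
        W.isClopen.2.inter_closure ⟨hWx, hx⟩
      have : x ∈ (U : Set X) := by
        have := closure_mono hSWU hx'
        rwa [U.isClopen.1.closure_eq] at this
      exact Set.mem_biUnion hUJ this
    refine ⟨⟨S, hSclosed, hSopen⟩, ?_, ?_⟩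
    · intro U hU y hy
      exact Set.mem_biUnion hU hy
    · intro t ht y hy
      obtain ⟨D, hDJ, hyD⟩ := by simpa [hS] using hy
      exact ht hDJ hyD
end
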